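/- Let $p$ be prime, $F$ an algebraically closed field of characteristic $p$, and $G = \{\sigma_{a,b} = \begin{pmatrix} 1 & a \\ 0 & b \end{pmatrix} : a, b \in \mathbb{F}_p, b \neq 0 \}$, a group of order $p(p-1)$, acting naturally on $W = F^2 = \langle X, Y \rangle$. For $1 \le n < p$, consider the $n$-th symmetric power $V_n = S^n(W)$ with basis $e_j = X^{n-j} Y^j$. Then: (a) $V_n^G = \langle X^n \rangle$ is one-dimensional; (b) $(V_n^*)^G = \{0\}$ for $1 \le n \le p-2$ and $(V_n^*)^G = \langle z_n \rangle$ for $n = p-1$, where $z_i$ is the dual basis; and (c) $\delta(G, V_n) = p$. -/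

import Mathlib

open MvPolynomial

/-- The matrix of `σ_{a,b}` acting on `V_n = S^n(W)` in the basis `e_j = X^{n-j}Y^j`:
`σ_{a,b}(e_j) = ∑_{i ≤ j} (j choose i) a^{j-i} b^i e_i`. -/
def symMat {F : Type*} [Field F] (n : ℕ) (a b : F) :
    Matrix (Fin (n + 1)) (Fin (n + 1)) F :=
  fun i j => if (i : ℕ) ≤ (j : ℕ) then
    (Nat.choose (j : ℕ) (i : ℕ) : F) * a ^ ((j : ℕ) - (i : ℕ)) * b ^ (i : ℕ) else 0

/-- `a` lies in the prime field `𝔽_p ⊆ F` (char `p`) iff `a^p = a`. -/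
def inFp {F : Type*} [Field F] (p : ℕ) (a : F) : Prop := a ^ p = a

/-- Substitution action of a matrix on the polynomial ring. -/
noncomputable def matAct {F : Type*} [Field F] {N : ℕ} (A : Matrix (Fin N) (Fin N) F) :
    MvPolynomial (Fin N) F →ₐ[F] MvPolynomial (Fin N) F :=
  aeval fun i => ∑ j, C (A i j) * X j

/-- `f` is invariant under the group `G = {σ_{a,b} : a, b ∈ 𝔽_p, b ≠ 0}`. -/
def symInv {F : Type*} [Field F] (p n : ℕ) (f : MvPolynomial (Fin (n + 1)) F) : Prop :=
  ∀ a b : F, inFp p a → inFp p b → b ≠ 0 → matAct (symMat n a b) f = f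

/-- `v ∈ V_n` is a fixed point of `G`. -/
def symFixed {F : Type*} [Field F] (p n : ℕ) (v : Fin (n + 1) → F) : Prop :=
  ∀ a b : F, inFp p a → inFp p b → b ≠ 0 → Matrix.mulVec (symMat n a b) v = v

/-- A linear form (covector) `u` on `V_n` is `G`-invariant. -/
def symDualFixed {F : Type*} [Field F] (p n : ℕ) (u : Fin (n + 1) → F) : Prop :=
  ∀ a b : F, inFp p a → inFp p b → b ≠ 0 → Matrix.vecMul u (symMat n a b) = u

/-- `ε(G,v)`. -/
noncomputable def epsSym {F : Type*} [Field F] (p n : ℕ) (v : Fin (n + 1) → F) : ℕ :=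
  sInf {d : ℕ | 0 < d ∧ ∃ f : MvPolynomial (Fin (n + 1)) F,
    symInv p n f ∧ f.IsHomogeneous d ∧ eval v f ≠ 0}

/-- `δ(G, V_n)`. -/
noncomputable def deltaSym {F : Type*} [Field F] (p n : ℕ) : ℕ :=
  sSup {e : ℕ | ∃ v : Fin (n + 1) → F, v ≠ 0 ∧ symFixed p n v ∧ e = epsSym p n v}

/-!
Identify `v ∈ V_n` with the polynomial `∑ vⱼ tʲ`, the binary form `∑ vⱼ X^(n-j) Y^j` at `X = 1`;
then `σ_{a,b}` acts as the substitution `t ↦ b t + a`. A polynomial of degree `≤ n < p`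
invariant under `t ↦ t + 1` is constant, so `V_n^G = ⟨e₀⟩`. The torus `σ_{0,b}` scales the dual
coordinate `zⱼ` by `bʲ`, which kills every invariant linear form in the degrees `0 < j < p - 1`,
and `σ_{1,1}` kills degree `0`; only `z_{p-1}` can survive.

For `δ(G, V_n) = p`: the product of the `p` linear forms `∑ γʲ xⱼ`, `γ ∈ 𝔽_p`, is invariant of
degree `p` and equals `cᵖ` at `c e₀`. Conversely, an invariant form `f` of degree `0 < d < p`
restricted to the line `e₁ + s e₀` is `σ_{1,1}`-periodic in `s` of degree `< p`, hence constant,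
so by homogeneity `f(c e₀ + t e₁) = f(e₁) tᵈ` for all `t ≠ 0`; as `F` is infinite this holds as a
polynomial identity in `t`, and `t = 0` gives `f(c e₀) = 0`.
-/

open scoped Polynomial
open Matrix

namespace MvPolynomial

variable {R σ : Type*} [CommRing R]

theorem IsHomogeneous.eval_smul {f : MvPolynomial σ R} {d : ℕ} (hf : f.IsHomogeneous d)
    (s : R) (w : σ → R) : eval (s • w) f = s ^ d * eval w f := by
  simp only [eval_eq, Finset.mul_sum]
  refine Finset.sum_congr rfl fun m hm => ?_
  rw [hf.degree_eq_sum_deg_support hm]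
  simp only [Pi.smul_apply, smul_eq_mul, mul_pow, Finset.prod_mul_distrib,
    Finset.prod_pow_eq_pow_sum]
  ring

noncomputable def restrictLine (f : MvPolynomial σ R) (v w : σ → R) : R[X] :=
  aeval (fun i => Polynomial.C (w i) * Polynomial.X + Polynomial.C (v i)) f

theorem eval_restrictLine (f : MvPolynomial σ R) (v w : σ → R) (t : R) :
    (f.restrictLine v w).eval t = eval (v + t • w) f := by
  rw [restrictLine, ← Polynomial.coe_aeval_eq_eval, ← AlgHom.comp_apply, comp_aeval,
    ← coe_aeval_eq_eval]
  change aeval _ f = aeval (v + t • w) f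
  congr 2
  funext i
  simp only [Polynomial.coe_aeval_eq_eval, Polynomial.eval_add, Polynomial.eval_mul,
    Polynomial.eval_C, Polynomial.eval_X, Pi.add_apply, Pi.smul_apply, smul_eq_mul]
  ring

theorem natDegree_restrictLine_le (f : MvPolynomial σ R) (v w : σ → R) :
    (f.restrictLine v w).natDegree ≤ f.totalDegree := by
  conv_lhs => rw [restrictLine, f.as_sum, map_sum]
  refine Polynomial.natDegree_sum_le_of_forall_le _ _ fun m hm => ?_
  rw [aeval_monomial, Polynomial.algebraMap_eq]
  refine (Polynomial.natDegree_C_mul_le _ _).trans ?_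
  refine (Polynomial.natDegree_prod_le _ _).trans ?_
  refine le_trans (Finset.sum_le_sum fun i _ => ?_) (le_totalDegree hm)
  refine Polynomial.natDegree_pow_le.trans ?_
  exact (Nat.mul_le_mul_left _ (Polynomial.natDegree_linear_le (b := v i))).trans_eq (mul_one _)

end MvPolynomial

namespace Polynomial

theorem ofFn_single {R : Type*} [Semiring R] [DecidableEq R] {n : ℕ} (i : Fin n)
    (c : R) : ofFn n (Pi.single i c) = monomial i c := by
  rw [ofFn_eq_sum_monomial, Finset.sum_eq_single i (fun j _ hj => by simp [hj])
    (by simp), Pi.single_eq_same]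

theorem eval_ofFn {R : Type*} [CommSemiring R] [DecidableEq R] {n : ℕ}
    (v : Fin n → R) (y : R) : (ofFn n v).eval y = ∑ i, v i * y ^ (i : ℕ) := by
  simp [ofFn_eq_sum_monomial, eval_finsetSum]

section CharP

variable {F : Type*} [Field F] {p : ℕ} [Fact p.Prime] [CharP F p]

theorem eq_C_eval_zero_of_eval_add_one {g : F[X]} (hdeg : g.natDegree < p)
    (hper : ∀ s, g.eval (s + 1) = g.eval s) : g = C (g.eval 0) := by
  have hnat : ∀ k : ℕ, g.eval (k : F) = g.eval 0 := by
    intro k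
    induction k with
    | zero => simp
    | succ k ih => rw [Nat.cast_succ, hper, ih]
  rw [← sub_eq_zero]
  refine eq_zero_of_natDegree_lt_card_of_eval_eq_zero _ (ZMod.castHom (dvd_refl p) F).injective
    (fun k => ?_) (by rwa [natDegree_sub_C, ZMod.card])
  rw [eval_sub, eval_C, ← ZMod.natCast_zmod_val k, map_natCast, hnat, sub_self]

end CharP

end Polynomial

section PrimeField

variable {F : Type*} [Field F] {p : ℕ} [Fact p.Prime] [CharP F p]

theorem inFp_iff_mem_range {a : F} : inFp p a ↔ a ∈ (ZMod.castHom (dvd_refl p) F).range := by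
  have hp : 1 < p := (Fact.out : p.Prime).one_lt
  constructor
  · intro ha
    have hroots := FiniteField.roots_X_pow_card_sub_X (ZMod p)
    rw [ZMod.card] at hroots
    have hsplits : (Polynomial.X ^ p - Polynomial.X : (ZMod p)[X]).Splits := by
      rw [Polynomial.splits_iff_card_roots, hroots, FiniteField.X_pow_card_sub_X_natDegree_eq _ hp]
      simp
    refine hsplits.mem_range_of_isRoot (FiniteField.X_pow_card_sub_X_ne_zero _ hp) ?_
    rw [inFp] at ha
    simp [ha]
  · rintro ⟨c, rfl⟩
    rw [inFp, ← map_pow, ZMod.pow_card]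

theorem exists_inFp_pow_ne_one :
    ∃ b : F, inFp p b ∧ b ≠ 0 ∧ ∀ j, 0 < j → j < p - 1 → b ^ j ≠ 1 := by
  obtain ⟨g, hg⟩ := IsCyclic.exists_ofOrder_eq_natCard (α := (ZMod p)ˣ)
  rw [Nat.card_eq_fintype_card, ZMod.card_units] at hg
  set φ := ZMod.castHom (dvd_refl p) F
  refine ⟨φ g, inFp_iff_mem_range.mpr ⟨g, rfl⟩, (map_ne_zero φ).mpr g.ne_zero, ?_⟩
  intro j hj0 hjp hgj
  rw [← map_pow, ← map_one φ] at hgj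
  exact pow_ne_one_of_lt_orderOf hj0.ne' (hg ▸ hjp) (Units.ext (φ.injective hgj))

end PrimeField

section SymMat

variable {F : Type*} [Field F] [DecidableEq F] {n : ℕ}

theorem ofFn_col_symMat (a b : F) (j : Fin (n + 1)) :
    Polynomial.ofFn (n + 1) ((symMat n a b).col j) =
      (Polynomial.C b * Polynomial.X + Polynomial.C a) ^ (j : ℕ) := by
  rw [Polynomial.ofFn_eq_sum_monomial]
  simp only [Matrix.col_apply, symMat]
  rw [Fin.sum_univ_eq_sum_range (fun i => Polynomial.monomial i (if i ≤ (j : ℕ) then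
      ((j : ℕ).choose i : F) * a ^ ((j : ℕ) - i) * b ^ i else 0)) (n + 1), add_pow,
    ← Finset.sum_subset (Finset.range_subset_range.2 j.isLt)]
  · refine Finset.sum_congr rfl fun i hi => ?_
    rw [if_pos (Nat.lt_succ_iff.mp (Finset.mem_range.mp hi)), ← Polynomial.C_mul_X_pow_eq_monomial]
    simp only [map_mul, map_pow, map_natCast]
    ring
  · intro i _ hi
    rw [if_neg (by simpa using hi), map_zero]

theorem ofFn_symMat_mulVec (a b : F) (v : Fin (n + 1) → F) :
    Polynomial.ofFn (n + 1) (symMat n a b *ᵥ v) =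
      (Polynomial.ofFn (n + 1) v).comp (Polynomial.C b * Polynomial.X + Polynomial.C a) := by
  rw [Matrix.mulVec_eq_sum, map_sum, Polynomial.ofFn_eq_sum_monomial v, Polynomial.sum_comp]
  refine Finset.sum_congr rfl fun j _ => ?_
  rw [op_smul_eq_smul, map_smul, Polynomial.monomial_comp, Polynomial.smul_eq_C_mul]
  exact congrArg _ (ofFn_col_symMat a b j)

end SymMat

section

variable {F : Type*} [Field F] {n p : ℕ}

theorem symMat_mulVec_single_zero [DecidableEq F] (a b c : F) :
    symMat n a b *ᵥ Pi.single 0 c = Pi.single 0 c := by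
  apply Polynomial.injective_ofFn
  rw [ofFn_symMat_mulVec, Polynomial.ofFn_single]
  simp

theorem eq_single_zero_of_symMat_one_one_mulVec_eq [DecidableEq F] [Fact p.Prime] [CharP F p]
    (hnp : n < p) {v : Fin (n + 1) → F} (hv : symMat n 1 1 *ᵥ v = v) :
    v = Pi.single 0 (v 0) := by
  set Q := Polynomial.ofFn (n + 1) v
  have hper : ∀ s, Q.eval (s + 1) = Q.eval s := fun s => by
    simpa [hv, add_comm] using congrArg (Polynomial.eval s) (ofFn_symMat_mulVec (1 : F) 1 v).symm
  have hQ := Polynomial.eq_C_eval_zero_of_eval_add_one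
    ((Polynomial.ofFn_natDegree_lt (Nat.succ_pos n) v).trans_le hnp) hper
  apply Polynomial.injective_ofFn
  rw [Polynomial.ofFn_single, Fin.val_zero, Polynomial.monomial_zero_left]
  convert hQ using 2
  rw [← Polynomial.coeff_zero_eq_eval_zero]
  simp

theorem symFixed_iff [Fact p.Prime] [CharP F p] (hnp : n < p) {v : Fin (n + 1) → F} :
    symFixed p n v ↔ ∃ c : F, v = c • Pi.single 0 1 := by
  classical
  simp only [← Pi.single_smul', smul_eq_mul, mul_one]
  refine ⟨fun hv => ⟨v 0, ?_⟩, ?_⟩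
  · exact eq_single_zero_of_symMat_one_one_mulVec_eq hnp (hv 1 1 (one_pow p) (one_pow p) one_ne_zero)
  · rintro ⟨c, rfl⟩ a b - - -
    exact symMat_mulVec_single_zero a b c

theorem symMat_zero_left (n : ℕ) (b : F) :
    symMat n 0 b = Matrix.diagonal fun i : Fin (n + 1) => b ^ (i : ℕ) := by
  ext i j
  rcases lt_trichotomy (i : ℕ) j with h | h | h
  · simp [symMat, h.le, (Nat.sub_pos_of_lt h).ne', Fin.ne_of_lt h]
  · simp [symMat, Fin.ext h]
  · simp [symMat, h.not_ge, Fin.ne_of_gt h]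

theorem apply_zero_eq_zero_of_symDualFixed (hn : 1 ≤ n) {u : Fin (n + 1) → F}
    (hu : symDualFixed p n u) : u 0 = 0 := by
  obtain ⟨m, rfl⟩ : ∃ m, n = m + 1 := ⟨n - 1, by omega⟩
  have h := congrFun (hu 1 1 (one_pow p) (one_pow p) one_ne_zero) 1
  simpa [vecMul, dotProduct, Fin.sum_univ_succ, symMat] using h

theorem apply_eq_zero_of_symDualFixed [Fact p.Prime] [CharP F p] (hn : 1 ≤ n)
    {u : Fin (n + 1) → F} (hu : symDualFixed p n u) {j : Fin (n + 1)} (hj : (j : ℕ) < p - 1) :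
    u j = 0 := by
  rcases Nat.eq_zero_or_pos j with hj0 | hj0
  · rw [show j = 0 from Fin.ext hj0]
    exact apply_zero_eq_zero_of_symDualFixed hn hu
  obtain ⟨b, hb, hb0, hbj⟩ := exists_inFp_pow_ne_one (F := F) (p := p)
  have h := congrFun (hu 0 b (zero_pow (Fact.out : p.Prime).ne_zero) hb hb0) j
  rw [symMat_zero_left, vecMul_diagonal] at h
  have : u j * (b ^ (j : ℕ) - 1) = 0 := by linear_combination h
  exact (mul_eq_zero.mp this).resolve_right (sub_ne_zero.mpr (hbj _ hj0 hj))

theorem symDualFixed_smul_single_last (hn : n + 1 = p) (c : F) :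
    symDualFixed p n (c • (Pi.single (Fin.last n) 1 : Fin (n + 1) → F)) := by
  intro a b _ hb hb0
  have hbn : b ^ n = 1 :=
    mul_right_cancel₀ hb0 (by rw [← pow_succ, hn, one_mul]; exact hb)
  funext j
  rw [smul_vecMul, single_one_vecMul]
  rcases eq_or_ne j (Fin.last n) with rfl | hj
  · simp [symMat, hbn]
  · simp [symMat, hj, Fin.val_lt_last hj]

theorem symDualFixed_iff_eq_zero [Fact p.Prime] [CharP F p] (hn1 : 1 ≤ n) (hn2 : n ≤ p - 2)
    {u : Fin (n + 1) → F} : symDualFixed p n u ↔ u = 0 := by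
  refine ⟨fun hu => funext fun j => apply_eq_zero_of_symDualFixed hn1 hu (by omega), ?_⟩
  rintro rfl a b - - -
  exact zero_vecMul _

theorem symDualFixed_iff_of_eq_sub_one [Fact p.Prime] [CharP F p] (hn1 : 1 ≤ n) (hn : n = p - 1)
    {u : Fin (n + 1) → F} :
    symDualFixed p n u ↔ ∃ c : F, u = c • (Pi.single (Fin.last n) 1 : Fin (n + 1) → F) := by
  have hp := (Fact.out : p.Prime).pos
  refine ⟨fun hu => ⟨u (Fin.last n), funext fun j => ?_⟩, ?_⟩
  · rcases eq_or_ne j (Fin.last n) with rfl | hj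
    · simp
    · have := Fin.val_lt_last hj
      simp [apply_eq_zero_of_symDualFixed hn1 hu (j := j) (by omega), hj]
  · rintro ⟨c, rfl⟩
    exact symDualFixed_smul_single_last (by omega) c

theorem eval_matAct {N : ℕ} (A : Matrix (Fin N) (Fin N) F) (v : Fin N → F)
    (f : MvPolynomial (Fin N) F) : eval v (matAct A f) = eval (A *ᵥ v) f := by
  rw [matAct, aeval_eq_bind₁, eval, eval₂Hom_bind₁, eval]
  congr 2
  funext i
  simp [mulVec, dotProduct, mul_comm]

noncomputable def powerForm (n : ℕ) (y : F) : MvPolynomial (Fin (n + 1)) F :=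
  ∑ j : Fin (n + 1), C (y ^ (j : ℕ)) * X j

theorem isHomogeneous_powerForm (n : ℕ) (y : F) : (powerForm n y).IsHomogeneous 1 :=
  IsHomogeneous.sum _ _ _ fun _ _ => isHomogeneous_C_mul_X _ _

theorem eval_smul_single_zero_powerForm (n : ℕ) (c y : F) :
    eval (c • Pi.single 0 1) (powerForm n y) = c := by
  simp [powerForm, Pi.single_apply]

theorem matAct_symMat_powerForm (a b y : F) :
    matAct (symMat n a b) (powerForm n y) = powerForm n (b * y + a) := by
  classical
  have hcol (k : Fin (n + 1)) : ∑ i, symMat n a b i k * y ^ (i : ℕ) = (b * y + a) ^ (k : ℕ) := by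
    simpa [Polynomial.eval_ofFn] using congrArg (Polynomial.eval y) (ofFn_col_symMat a b k)
  simp only [powerForm, matAct, map_sum, map_mul, aeval_C, aeval_X, algebraMap_eq, Finset.mul_sum]
  rw [Finset.sum_comm]
  refine Finset.sum_congr rfl fun k _ => ?_
  rw [← hcol, map_sum, Finset.sum_mul]
  refine Finset.sum_congr rfl fun i _ => ?_
  rw [map_mul, ← mul_assoc, mul_comm (C (symMat n a b i k))]

noncomputable def normForm (p n : ℕ) [NeZero p] [CharP F p] : MvPolynomial (Fin (n + 1)) F :=
  ∏ γ : ZMod p, powerForm n (ZMod.castHom (dvd_refl p) F γ)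

section NormForm

variable [Fact p.Prime] [CharP F p]

theorem symInv_normForm : symInv p n (normForm (F := F) p n) := by
  intro a b ha hb hb0
  obtain ⟨α, rfl⟩ := inFp_iff_mem_range.mp ha
  obtain ⟨β, rfl⟩ := inFp_iff_mem_range.mp hb
  have hβ : β ≠ 0 := by rintro rfl; exact hb0 (map_zero _)
  simp_rw [normForm, map_prod, matAct_symMat_powerForm, ← map_mul, ← map_add]
  exact Fintype.prod_equiv ((Equiv.mulLeft₀ β hβ).trans (Equiv.addRight α)) _ _ fun _ => rfl

theorem isHomogeneous_normForm : (normForm (F := F) p n).IsHomogeneous p := by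
  simpa [normForm] using IsHomogeneous.prod Finset.univ _ (fun _ => 1)
    (fun γ _ => isHomogeneous_powerForm n (ZMod.castHom (dvd_refl p) F γ))

theorem eval_smul_single_zero_normForm (c : F) :
    eval (c • Pi.single 0 1) (normForm (F := F) p n) = c ^ p := by
  simp [normForm, eval_smul_single_zero_powerForm]

end NormForm

theorem eval_smul_single_zero_eq_zero_of_isHomogeneous [Infinite F] [Fact p.Prime] [CharP F p]
    (hn : 1 ≤ n) {d : ℕ} (hd0 : 0 < d) (hdp : d < p) {f : MvPolynomial (Fin (n + 1)) F}
    (hf : f.IsHomogeneous d) (hinv : matAct (symMat n 1 1) f = f) (c : F) :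
    eval (c • Pi.single 0 1) f = 0 := by
  classical
  obtain ⟨m, rfl⟩ : ∃ m, n = m + 1 := ⟨n - 1, by omega⟩
  set e₀ : Fin (m + 1 + 1) → F := Pi.single 0 1
  set e₁ : Fin (m + 1 + 1) → F := Pi.single 1 1
  have hshift (s : F) : symMat (m + 1) 1 1 *ᵥ (e₁ + s • e₀) = e₁ + (s + 1) • e₀ := by
    apply Polynomial.injective_ofFn
    simp only [ofFn_symMat_mulVec, map_add, map_smul, e₀, e₁, Polynomial.ofFn_single]
    simp [Polynomial.smul_eq_C_mul, Polynomial.monomial_one_one_eq_X]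
    ring
  have hconst (s : F) : eval (e₁ + s • e₀) f = eval e₁ f := by
    have hg := Polynomial.eq_C_eval_zero_of_eval_add_one
      ((natDegree_restrictLine_le f e₁ e₀).trans_lt (hf.totalDegree_le.trans_lt hdp)) fun s => by
        rw [eval_restrictLine, eval_restrictLine, ← hshift, ← eval_matAct, hinv]
    simpa [eval_restrictLine] using congrArg (Polynomial.eval s) hg
  have hline : f.restrictLine (c • e₀) e₁ = Polynomial.C (eval e₁ f) * Polynomial.X ^ d := by
    refine Polynomial.eq_of_infinite_eval_eq _ _
      ((Set.finite_singleton 0).infinite_compl.mono fun t (ht : t ≠ 0) => ?_)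
    have hpt : c • e₀ + t • e₁ = t • (e₁ + (c / t) • e₀) := by
      rw [smul_add, smul_smul, mul_div_cancel₀ c ht, add_comm (c • e₀)]
    change Polynomial.eval t _ = Polynomial.eval t _
    rw [eval_restrictLine, hpt, hf.eval_smul, hconst, Polynomial.eval_mul, Polynomial.eval_C,
      Polynomial.eval_pow, Polynomial.eval_X, mul_comm]
  simpa [eval_restrictLine, hd0.ne'] using congrArg (Polynomial.eval 0) hline

theorem epsSym_smul_single_zero [Infinite F] [Fact p.Prime] [CharP F p] (hn : 1 ≤ n) {c : F}
    (hc : c ≠ 0) : epsSym p n (c • (Pi.single 0 1 : Fin (n + 1) → F)) = p := by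
  have hp : p ∈ {d : ℕ | 0 < d ∧ ∃ f : MvPolynomial (Fin (n + 1)) F,
      symInv p n f ∧ f.IsHomogeneous d ∧ eval (c • Pi.single 0 1) f ≠ 0} :=
    ⟨(Fact.out : p.Prime).pos, normForm p n, symInv_normForm, isHomogeneous_normForm,
      by rw [eval_smul_single_zero_normForm]; exact pow_ne_zero _ hc⟩
  refine le_antisymm (Nat.sInf_le hp) (le_csInf ⟨p, hp⟩ ?_)
  rintro d ⟨hd0, f, hinv, hf, hne⟩
  by_contra! hdp
  exact hne (eval_smul_single_zero_eq_zero_of_isHomogeneous hn hd0 hdp hf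
    (hinv 1 1 (one_pow p) (one_pow p) one_ne_zero) c)

theorem deltaSym_eq_char [Infinite F] [Fact p.Prime] [CharP F p] (hn1 : 1 ≤ n) (hnp : n < p) :
    deltaSym (F := F) p n = p := by
  have hset : {e : ℕ | ∃ v : Fin (n + 1) → F, v ≠ 0 ∧ symFixed p n v ∧ e = epsSym p n v} = {p} := by
    ext e
    constructor
    · rintro ⟨v, hv0, hv, rfl⟩
      obtain ⟨c, rfl⟩ := (symFixed_iff hnp).mp hv
      exact epsSym_smul_single_zero hn1 (by rintro rfl; simp at hv0)
    · rintro rfl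
      refine ⟨1 • Pi.single 0 1, by simp, (symFixed_iff hnp).mpr ⟨1, rfl⟩, ?_⟩
      exact (epsSym_smul_single_zero hn1 one_ne_zero).symm
  rw [deltaSym, hset, csSup_singleton]

end

theorem stmt17 {F : Type*} [Field F] [IsAlgClosed F] {p : ℕ} (hp : p.Prime) [CharP F p]
    (n : ℕ) (hn1 : 1 ≤ n) (hnp : n < p) :
    -- (a) `V_n^G = ⟨X^n⟩ = ⟨e_0⟩`
    (∀ v : Fin (n + 1) → F, symFixed p n v ↔ ∃ c : F, v = c • (Pi.single 0 1 : Fin (n + 1) → F)) ∧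
    -- (b) the invariant linear forms
    ((n ≤ p - 2 → ∀ u : Fin (n + 1) → F, symDualFixed p n u ↔ u = 0) ∧
     (n = p - 1 → ∀ u : Fin (n + 1) → F,
        symDualFixed p n u ↔ ∃ c : F, u = c • (Pi.single (Fin.last n) 1 : Fin (n + 1) → F))) ∧
    -- (c) the degree of reductivity
    deltaSym (F := F) p n = p := by
  have := Fact.mk hp
  exact ⟨fun _ => symFixed_iff hnp, ⟨fun hn _ => symDualFixed_iff_eq_zero hn1 hn,
    fun hn _ => symDualFixed_iff_of_eq_sub_one hn1 hn⟩, deltaSym_eq_char hn1 hnp⟩
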